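/- arXiv:2407.08881 — 2 statements merged into one kernel-verified Lean document; each statement's English description precedes it below -/
import Mathlib

section
/- Let p be a prime and let r ≥ 1 and α ≥ 0 be integers with α ≤ r. Then the sum, over all divisors d of p^r such that gcd(d, p^r/d) divides p^{r−α}, of φ(gcd(d, p^r/d)) equals: 2·p^{r−α} if r < 2α; 2·p^{(r−1)/2} if r ≥ 2α and r is odd; and p^{r/2} + p^{r/2 − 1} if r ≥ 2α and r is even. -/
/-!
Every divisor of `p ^ r` is `p ^ i` with `0 ≤ i ≤ r`, and then
`gcd(d, p ^ r / d) = p ^ min(i, r - i)`, so the sum is a sum of `φ(p ^ j)` over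
`j = min(i, r - i)`. Each value `j < r / 2` is taken twice (by `i = j` and `i = r - j`) and,
for even `r`, `j = r / 2` once. The divisibility condition cuts off at `j ≤ r - α`, which only
matters when `r < 2α`; the resulting truncated sums collapse by `∑_{j ≤ m} φ(p ^ j) = p ^ m`.
-/

open Finset

namespace Finset

variable {M : Type*} [AddCommMonoid M]

theorem sum_range_ite_min_tsub_lt (g : ℕ → M) {r b : ℕ} (h : 2 * b ≤ r + 1) :
    ∑ i ∈ range (r + 1), (if min i (r - i) < b then g (min i (r - i)) else 0) =
      2 • ∑ i ∈ range b, g i := by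
  -- `2 * b ≤ r + 1` makes `i < b` and `r - i < b` mutually exclusive.
  have split : ∀ i ∈ range (r + 1),
      (if min i (r - i) < b then g (min i (r - i)) else 0) =
        (if i < b then g i else 0) + (if r - i < b then g (r - i) else 0) := by
    intro i hi
    rw [mem_range] at hi
    rcases le_total i (r - i) with hle | hle
    · rw [min_eq_left hle, if_neg (show ¬ r - i < b by omega), add_zero]
    · rw [min_eq_right hle, if_neg (show ¬ i < b by omega), zero_add]
  have reflect := sum_range_reflect (fun j => if j < b then g j else 0) (r + 1)
  simp only [add_tsub_cancel_right] at reflect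
  have cut : ∑ i ∈ range (r + 1), (if i < b then g i else 0) = ∑ i ∈ range b, g i := by
    rw [← sum_filter]
    congr 1
    ext i
    simp only [mem_filter, mem_range]
    omega
  rw [sum_congr rfl split, sum_add_distrib, reflect, cut, two_nsmul]

theorem sum_range_ite_min_tsub_lt_of_div_two_lt (g : ℕ → M) {r b : ℕ} (h : r / 2 < b) :
    ∑ i ∈ range (r + 1), (if min i (r - i) < b then g (min i (r - i)) else 0) =
      ∑ i ∈ range (r + 1), g (min i (r - i)) :=
  sum_congr rfl fun i _ => if_pos (by omega)

theorem sum_range_min_two_mul_tsub (g : ℕ → M) (k : ℕ) :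
    ∑ i ∈ range (2 * k + 1), g (min i (2 * k - i)) = 2 • ∑ i ∈ range k, g i + g k := by
  have split : ∀ i ∈ range (2 * k + 1), g (min i (2 * k - i)) =
      (if min i (2 * k - i) < k then g (min i (2 * k - i)) else 0) +
        (if i = k then g k else 0) := by
    intro i hi
    rw [mem_range] at hi
    by_cases hik : i = k
    · subst hik
      rw [if_neg (by omega), if_pos rfl, zero_add, show min i (2 * i - i) = i by omega]
    · rw [if_pos (by omega), if_neg hik, add_zero]
  rw [sum_congr rfl split, sum_add_distrib, sum_range_ite_min_tsub_lt g (by omega),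
    sum_ite_eq' _ k, if_pos (mem_range.2 (by omega))]

end Finset

namespace Nat

theorem gcd_pow_pow_eq_pow_min (p a b : ℕ) : gcd (p ^ a) (p ^ b) = p ^ min a b := by
  rcases le_total a b with h | h
  · rw [gcd_eq_left (pow_dvd_pow p h), min_eq_left h]
  · rw [gcd_eq_right (pow_dvd_pow p h), min_eq_right h]

theorem sum_divisors_prime_pow_gcd_div {M : Type*} [AddCommMonoid M] {p : ℕ} (hp : p.Prime)
    (r : ℕ) (f : ℕ → M) :
    ∑ d ∈ (p ^ r).divisors, f (gcd d (p ^ r / d)) =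
      ∑ i ∈ range (r + 1), f (p ^ min i (r - i)) := by
  rw [sum_divisors_prime_pow hp]
  refine sum_congr rfl fun i hi => ?_
  rw [Nat.pow_div (by simpa [Nat.lt_add_one_iff] using hi) hp.pos, gcd_pow_pow_eq_pow_min]

theorem sum_range_totient_prime_pow {p : ℕ} (hp : p.Prime) (k : ℕ) :
    ∑ i ∈ range (k + 1), φ (p ^ i) = p ^ k := by
  rw [← sum_divisors_prime_pow hp, sum_totient]

theorem two_mul_pow_add_totient_prime_pow_succ {p : ℕ} (hp : p.Prime) (m : ℕ) :
    2 * p ^ m + φ (p ^ (m + 1)) = p ^ (m + 1) + p ^ m := by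
  obtain ⟨q, rfl⟩ : ∃ q, p = q + 1 := exists_eq_add_one.2 hp.pos
  rw [totient_prime_pow_succ hp, Nat.add_sub_cancel]
  ring

end Nat

theorem sigma_prime_pow_general (p : ℕ) (hp : p.Prime) (r α : ℕ) (hr : 1 ≤ r) :
    (r < 2 * α →
      ∑ d ∈ (p ^ r).divisors.filter (fun d => Nat.gcd d (p ^ r / d) ∣ p ^ (r - α)),
          (Nat.gcd d (p ^ r / d)).totient = 2 * p ^ (r - α)) ∧
    (2 * α ≤ r → Odd r →
      ∑ d ∈ (p ^ r).divisors.filter (fun d => Nat.gcd d (p ^ r / d) ∣ p ^ (r - α)),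
          (Nat.gcd d (p ^ r / d)).totient = 2 * p ^ ((r - 1) / 2)) ∧
    (2 * α ≤ r → Even r →
      ∑ d ∈ (p ^ r).divisors.filter (fun d => Nat.gcd d (p ^ r / d) ∣ p ^ (r - α)),
          (Nat.gcd d (p ^ r / d)).totient = p ^ (r / 2) + p ^ (r / 2 - 1)) := by
  have reduce : ∑ d ∈ (p ^ r).divisors.filter (fun d => Nat.gcd d (p ^ r / d) ∣ p ^ (r - α)),
      (Nat.gcd d (p ^ r / d)).totient = ∑ i ∈ range (r + 1),
        if min i (r - i) < r - α + 1 then (p ^ min i (r - i)).totient else 0 := by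
    rw [sum_filter, Nat.sum_divisors_prime_pow_gcd_div hp r
      fun n => if n ∣ p ^ (r - α) then n.totient else 0]
    simp only [Nat.pow_dvd_pow_iff_le_right hp.one_lt, Nat.lt_add_one_iff]
  have htot := Nat.sum_range_totient_prime_pow hp
  -- Named so that `rw` can match the higher-order pattern `g (min i (r - i))`.
  let g : ℕ → ℕ := fun j => (p ^ j).totient
  refine ⟨fun hlt => ?_, fun hle ⟨k, hk⟩ => ?_, fun hle ⟨k, hk⟩ => ?_⟩
  · rw [reduce, sum_range_ite_min_tsub_lt g (by omega), htot, smul_eq_mul]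
  · rw [reduce, sum_range_ite_min_tsub_lt_of_div_two_lt g (by omega),
      ← sum_range_ite_min_tsub_lt_of_div_two_lt g (b := k + 1) (by omega),
      sum_range_ite_min_tsub_lt g (by omega), htot, smul_eq_mul, show (r - 1) / 2 = k by omega]
  · obtain ⟨m, rfl⟩ : ∃ m, k = m + 1 := Nat.exists_eq_add_one.2 (by omega)
    rw [reduce, sum_range_ite_min_tsub_lt_of_div_two_lt g (by omega),
      show r = 2 * (m + 1) by omega, sum_range_min_two_mul_tsub g, htot,
      smul_eq_mul, show 2 * (m + 1) / 2 = m + 1 by omega, Nat.add_sub_cancel]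
    exact Nat.two_mul_pow_add_totient_prime_pow_succ hp m

/-- Let `p` be a prime and `1 ≤ r`, `0 ≤ α ≤ r`. Then
`∑_{d ∣ p^r, gcd(d, p^r/d) ∣ p^{r-α}} φ(gcd(d, p^r/d))` equals `2·p^{r-α}` if `r < 2α`;
`2·p^{(r-1)/2}` if `r ≥ 2α` and `r` is odd; and `p^{r/2} + p^{r/2-1}` if `r ≥ 2α` and
`r` is even. -/
theorem sigma_prime_pow (p : ℕ) (hp : p.Prime) (r α : ℕ) (hr : 1 ≤ r) (hαr : α ≤ r) :
    (r < 2 * α →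
      ∑ d ∈ (p ^ r).divisors.filter (fun d => Nat.gcd d (p ^ r / d) ∣ p ^ (r - α)),
          (Nat.gcd d (p ^ r / d)).totient = 2 * p ^ (r - α)) ∧
    (2 * α ≤ r → Odd r →
      ∑ d ∈ (p ^ r).divisors.filter (fun d => Nat.gcd d (p ^ r / d) ∣ p ^ (r - α)),
          (Nat.gcd d (p ^ r / d)).totient = 2 * p ^ ((r - 1) / 2)) ∧
    (2 * α ≤ r → Even r →
      ∑ d ∈ (p ^ r).divisors.filter (fun d => Nat.gcd d (p ^ r / d) ∣ p ^ (r - α)),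
          (Nat.gcd d (p ^ r / d)).totient = p ^ (r / 2) + p ^ (r / 2 - 1)) :=
  sigma_prime_pow_general p hp r α hr
end

section
/- Let β be the multiplicative arithmetic function determined by β(1) = 1 and, for every prime p, β(p) = −2, β(p^2) = 1, and β(p^r) = 0 for r ≥ 3, and let g be the arithmetic function g(n) = ∑_{d ∣ n} φ(gcd(d, n/d)). Then for every prime p and every r ≥ 1: (β * g)(p^r) = 0 if r is odd; (β * g)(p^2) = p − 2; and (β * g)(p^r) = p^{r/2} − 2p^{r/2 − 1} + p^{r/2 − 2} for every even r ≥ 4. -/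
/-!
At a prime power, `sigmaPhi (p ^ k) = ∑_{i ≤ k} φ(p ^ min i (k - i))` splits into the partial
sums `∑_{i ≤ ⌊k/2⌋} φ(p^i)` and `∑_{i < ⌈k/2⌉} φ(p^i)`, each a power of `p` by Gauss's
`∑_{d ∣ n} φ(d) = n`. So `sigmaPhi (p^(2m+1)) = 2p^m` and `sigmaPhi (p^(2m+2)) = p^(m+1) + p^m`.
As `β` is `1, -2, 1` at `1, p, p^2` and vanishes on higher powers of `p`, `(β * sigmaPhi)(p^r)` is
the second difference `sigmaPhi (p^r) - 2 sigmaPhi (p^(r-1)) + sigmaPhi (p^(r-2))`.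
-/

def sigmaPhi : ArithmeticFunction ℤ :=
  ⟨fun n => ∑ d ∈ n.divisors, ((Nat.gcd d (n / d)).totient : ℤ), by simp⟩

open Finset
open scoped Nat

theorem Finset.sum_range_min_sub {M : Type*} [AddCommMonoid M] (f : ℕ → M) (k : ℕ) :
    ∑ i ∈ range (k + 1), f (min i (k - i))
      = ∑ i ∈ range (k / 2 + 1), f i + ∑ i ∈ range ((k + 1) / 2), f i := by
  rw [show range (k + 1) = range (k / 2 + 1 + (k + 1) / 2) by congr 1; omega, sum_range_add,
    ← sum_range_reflect _ ((k + 1) / 2)]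
  congr 1 <;> refine sum_congr rfl fun i hi => congrArg f ?_ <;> rw [mem_range] at hi <;> omega

theorem Nat.gcd_pow_pow (p i j : ℕ) : Nat.gcd (p ^ i) (p ^ j) = p ^ min i j := by
  rcases le_total i j with h | h
  · rw [min_eq_left h, Nat.gcd_eq_left (pow_dvd_pow p h)]
  · rw [min_eq_right h, Nat.gcd_eq_right (pow_dvd_pow p h)]

theorem Nat.sum_range_totient_prime_pow_s14 {p : ℕ} (hp : p.Prime) (m : ℕ) :
    ∑ i ∈ range (m + 1), φ (p ^ i) = p ^ m := by
  rw [← Nat.sum_divisors_prime_pow hp, Nat.sum_totient]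

namespace ArithmeticFunction

theorem mul_apply_prime_pow {R : Type*} [Semiring R]
    (f g : ArithmeticFunction R) {p : ℕ} (hp : p.Prime) (k : ℕ) :
    (f * g) (p ^ k) = ∑ i ∈ range (k + 1), f (p ^ i) * g (p ^ (k - i)) := by
  rw [mul_apply, Nat.sum_divisorsAntidiagonal (fun d e => f d * g e),
    Nat.sum_divisors_prime_pow hp]
  refine sum_congr rfl fun i hi => ?_
  rw [Nat.pow_div (by have := mem_range.1 hi; omega) hp.pos]

theorem mul_apply_prime_eq_sub_two_mul {β : ArithmeticFunction ℤ} {p : ℕ}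
    (hp : p.Prime) (hβ1 : β 1 = 1) (hβp : β p = -2) (g : ArithmeticFunction ℤ) :
    (β * g) p = g p - 2 * g 1 := by
  rw [← pow_one p, mul_apply_prime_pow _ _ hp, sum_range_succ,
    sum_range_one, pow_zero, pow_one, hβ1, hβp]
  ring

theorem mul_apply_prime_pow_add_two_eq_sub_two_mul_add {β : ArithmeticFunction ℤ} {p : ℕ}
    (hp : p.Prime) (hβ1 : β 1 = 1) (hβp : β p = -2) (hβp2 : β (p ^ 2) = 1)
    (hβ3 : ∀ r, 3 ≤ r → β (p ^ r) = 0) (g : ArithmeticFunction ℤ) (k : ℕ) :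
    (β * g) (p ^ (k + 2)) = g (p ^ (k + 2)) - 2 * g (p ^ (k + 1)) + g (p ^ k) := by
  rw [mul_apply_prime_pow _ _ hp, show k + 2 + 1 = 3 + k by omega,
    sum_range_add, sum_eq_zero (s := range k) fun i _ => by rw [hβ3 _ (by omega), zero_mul]]
  simp only [sum_range_succ, sum_range_zero, pow_zero, pow_one, hβ1, hβp, hβp2]
  rw [show k + 2 - 0 = k + 2 by omega, show k + 2 - 1 = k + 1 by omega,
    show k + 2 - 2 = k by omega]
  ring

end ArithmeticFunction

theorem sigmaPhi_one : sigmaPhi 1 = 1 := by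
  simp [sigmaPhi]

theorem sigmaPhi_apply_prime_pow {p : ℕ} (hp : p.Prime) (k : ℕ) :
    sigmaPhi (p ^ k) = ∑ i ∈ range (k + 1), (φ (p ^ min i (k - i)) : ℤ) := by
  change ∑ d ∈ (p ^ k).divisors, _ = _
  rw [Nat.sum_divisors_prime_pow hp]
  refine sum_congr rfl fun i hi => ?_
  rw [Nat.pow_div (by have := mem_range.1 hi; omega) hp.pos, Nat.gcd_pow_pow]

theorem sigmaPhi_apply_prime_pow_succ {p : ℕ} (hp : p.Prime) (k : ℕ) :
    sigmaPhi (p ^ (k + 1)) = (p : ℤ) ^ ((k + 1) / 2) + (p : ℤ) ^ (k / 2) := by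
  rw [sigmaPhi_apply_prime_pow hp, sum_range_min_sub (fun i => (φ (p ^ i) : ℤ)),
    show (k + 1 + 1) / 2 = k / 2 + 1 by omega]
  simp only [← Nat.cast_sum, Nat.sum_range_totient_prime_pow_s14 hp, Nat.cast_pow]

theorem sigmaPhi_apply_prime_pow_odd {p : ℕ} (hp : p.Prime) (m : ℕ) :
    sigmaPhi (p ^ (2 * m + 1)) = 2 * (p : ℤ) ^ m := by
  rw [sigmaPhi_apply_prime_pow_succ hp, show (2 * m + 1) / 2 = m by omega,
    show 2 * m / 2 = m by omega, two_mul]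

theorem sigmaPhi_apply_prime_pow_even {p : ℕ} (hp : p.Prime) (m : ℕ) :
    sigmaPhi (p ^ (2 * m + 2)) = (p : ℤ) ^ (m + 1) + (p : ℤ) ^ m := by
  rw [sigmaPhi_apply_prime_pow_succ hp, show (2 * m + 1 + 1) / 2 = m + 1 by omega,
    show (2 * m + 1) / 2 = m by omega]

theorem sigmaPhi_apply_prime {p : ℕ} (hp : p.Prime) : sigmaPhi p = 2 := by
  simpa using sigmaPhi_apply_prime_pow_odd hp 0

theorem sigmaPhi_apply_prime_pow_sub_two_mul_add_odd {p : ℕ} (hp : p.Prime) (m : ℕ) :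
    sigmaPhi (p ^ (2 * m + 3)) - 2 * sigmaPhi (p ^ (2 * m + 2)) + sigmaPhi (p ^ (2 * m + 1))
      = 0 := by
  rw [show 2 * m + 3 = 2 * (m + 1) + 1 by ring, sigmaPhi_apply_prime_pow_odd hp,
    sigmaPhi_apply_prime_pow_even hp, sigmaPhi_apply_prime_pow_odd hp]
  ring

theorem sigmaPhi_apply_prime_pow_sub_two_mul_add_even {p : ℕ} (hp : p.Prime) (m : ℕ) :
    sigmaPhi (p ^ (2 * m + 4)) - 2 * sigmaPhi (p ^ (2 * m + 3)) + sigmaPhi (p ^ (2 * m + 2))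
      = (p : ℤ) ^ (m + 2) - 2 * (p : ℤ) ^ (m + 1) + (p : ℤ) ^ m := by
  rw [show 2 * m + 4 = 2 * (m + 1) + 2 by ring, show 2 * m + 3 = 2 * (m + 1) + 1 by ring,
    sigmaPhi_apply_prime_pow_even hp, sigmaPhi_apply_prime_pow_odd hp,
    sigmaPhi_apply_prime_pow_even hp]
  ring

/-- Let `β` be the multiplicative arithmetic function with `β(p) = -2`, `β(p^2) = 1`
and `β(p^r) = 0` for `r ≥ 3`, and let `g(n) = ∑_{d ∣ n} φ(gcd(d, n/d))`. Then for
every prime `p`: `(β * g)(p^r) = 0` for odd `r ≥ 1`; `(β * g)(p^2) = p - 2`; and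
`(β * g)(p^r) = p^{r/2} - 2p^{r/2-1} + p^{r/2-2}` for even `r ≥ 4`. -/
theorem beta_mul_sigmaPhi_apply (β : ArithmeticFunction ℤ)
    (hβ : β.IsMultiplicative)
    (hβ1 : ∀ p : ℕ, p.Prime → β p = -2)
    (hβ2 : ∀ p : ℕ, p.Prime → β (p ^ 2) = 1)
    (hβ3 : ∀ p r : ℕ, p.Prime → 3 ≤ r → β (p ^ r) = 0) :
    ∀ p : ℕ, p.Prime →
      (∀ r : ℕ, 1 ≤ r → Odd r → (β * sigmaPhi) (p ^ r) = 0) ∧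
      (β * sigmaPhi) (p ^ 2) = (p : ℤ) - 2 ∧
      (∀ r : ℕ, 4 ≤ r → Even r →
        (β * sigmaPhi) (p ^ r)
          = (p : ℤ) ^ (r / 2) - 2 * (p : ℤ) ^ (r / 2 - 1) + (p : ℤ) ^ (r / 2 - 2)) := by
  intro p hp
  have hconv := ArithmeticFunction.mul_apply_prime_pow_add_two_eq_sub_two_mul_add hp hβ.map_one
    (hβ1 p hp) (hβ2 p hp) (hβ3 p · hp) sigmaPhi
  refine ⟨fun r _ hr => ?_, ?_, fun r _ hr => ?_⟩
  · obtain ⟨_ | m, rfl⟩ := hr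
    · rw [Nat.mul_zero, zero_add, pow_one,
        ArithmeticFunction.mul_apply_prime_eq_sub_two_mul hp hβ.map_one (hβ1 p hp),
        sigmaPhi_apply_prime hp, sigmaPhi_one]
      norm_num
    · exact (hconv (2 * m + 1)).trans (sigmaPhi_apply_prime_pow_sub_two_mul_add_odd hp m)
  · rw [hconv 0, sigmaPhi_apply_prime_pow_even hp 0, sigmaPhi_apply_prime_pow_odd hp 0,
      pow_zero p, sigmaPhi_one]
    ring
  · obtain ⟨m, rfl⟩ : ∃ m, r = 2 * m + 4 :=
      ⟨r / 2 - 2, by obtain ⟨n, rfl⟩ := hr; omega⟩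
    rw [show (2 * m + 4) / 2 - 1 = m + 1 by omega, show (2 * m + 4) / 2 - 2 = m by omega,
      show (2 * m + 4) / 2 = m + 2 by omega]
    exact (hconv (2 * m + 2)).trans (sigmaPhi_apply_prime_pow_sub_two_mul_add_even hp m)
end
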